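/- arXiv:2405.15913 — 2 statements merged into one kernel-verified Lean document; each statement's English description precedes it below -/
import Mathlib

section
/- Let n ≥ 1, let A be the prefix workload matrix, let 1 ≤ b ≤ n, and let θ ∈ ℝ^b with θ_1 ≠ 0. Let w = C(θ)^{-1}·𝟙 ∈ ℝ^n, where 𝟙 is the all-ones vector. Then the squared Frobenius norm of A·C(θ)^{-1} equals Σ_{i=1}^{n} (n−i+1)·w_i². -/
/-- The `n × n` prefix workload matrix (lower triangular matrix of ones). -/
def prefixMatrix (n : ℕ) : Matrix (Fin n) (Fin n) ℝ :=
  fun i j => if (j : ℕ) ≤ (i : ℕ) then 1 else 0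

/-- The `b`-banded lower triangular Toeplitz matrix `C(θ)` with coefficients
`θ` (0-indexed: `C i j = θ (i - j)` when `0 ≤ i - j ≤ b - 1`, else `0`). -/
def bandedToeplitz (n b : ℕ) (θ : Fin b → ℝ) : Matrix (Fin n) (Fin n) ℝ :=
  fun i j =>
    if h : (j : ℕ) ≤ (i : ℕ) ∧ (i : ℕ) - (j : ℕ) < b then
      θ ⟨(i : ℕ) - (j : ℕ), h.2⟩
    else 0

/-- Extension of `θ` to all of `ℕ` by zero. -/
noncomputable def thetaExt (b : ℕ) (θ : Fin b → ℝ) (k : ℕ) : ℝ :=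
  if h : k < b then θ ⟨k, h⟩ else 0

/-- The coefficients of the (formal) inverse power series. -/
noncomputable def gSeq (b : ℕ) (θ : Fin b → ℝ) : ℕ → ℝ
  | 0 => (thetaExt b θ 0)⁻¹
  | (m+1) => -(thetaExt b θ 0)⁻¹ *
      ∑ k ∈ Finset.range (m+1), thetaExt b θ (k+1) * gSeq b θ (m - k)
  decreasing_by exact Nat.lt_succ_of_le (Nat.sub_le _ _)

lemma gSeq_conv (b : ℕ) (θ : Fin b → ℝ) (hθ : thetaExt b θ 0 ≠ 0) (m : ℕ) :
    ∑ k ∈ Finset.range (m+1), thetaExt b θ k * gSeq b θ (m - k)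
      = if m = 0 then 1 else 0 := by
  cases m with
  | zero => simp [gSeq, mul_inv_cancel₀ hθ]
  | succ m =>
    rw [Finset.sum_range_succ']
    have h1 : ∀ k ∈ Finset.range (m+1),
        thetaExt b θ (k+1) * gSeq b θ (m + 1 - (k+1))
          = thetaExt b θ (k+1) * gSeq b θ (m - k) := by
      intro k _; rw [Nat.succ_sub_succ]
    rw [Finset.sum_congr rfl h1]
    have h0 : m + 1 - 0 = m + 1 := rfl
    rw [h0]
    have hg : gSeq b θ (m+1) = -(thetaExt b θ 0)⁻¹ *
        ∑ k ∈ Finset.range (m+1), thetaExt b θ (k+1) * gSeq b θ (m - k) := by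
      rw [gSeq]
    rw [hg]
    field_simp
    ring_nf
    rw [if_neg (by omega)]

/-- Candidate inverse matrix. -/
noncomputable def Gmat (n b : ℕ) (θ : Fin b → ℝ) : Matrix (Fin n) (Fin n) ℝ :=
  fun i j => if (j : ℕ) ≤ (i : ℕ) then gSeq b θ ((i : ℕ) - (j : ℕ)) else 0

lemma bandedToeplitz_eq (n b : ℕ) (θ : Fin b → ℝ) (i j : Fin n) :
    bandedToeplitz n b θ i j
      = if (j : ℕ) ≤ (i : ℕ) then thetaExt b θ ((i : ℕ) - (j : ℕ)) else 0 := by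
  unfold bandedToeplitz thetaExt
  by_cases h1 : (j : ℕ) ≤ (i : ℕ)
  · by_cases h2 : (i : ℕ) - (j : ℕ) < b
    · rw [dif_pos ⟨h1, h2⟩, if_pos h1, dif_pos h2]
    · rw [dif_neg (by tauto), if_pos h1, dif_neg h2]
  · rw [dif_neg (by tauto), if_neg h1]

/-- Reindexing a banded convolution sum over `Fin n`. -/
lemma band_sum (n : ℕ) (i j : Fin n) (hj : (j : ℕ) ≤ (i : ℕ)) (f h : ℕ → ℝ) :
    ∑ k : Fin n, (if (k : ℕ) ≤ (i : ℕ) then f ((i : ℕ) - (k : ℕ)) else 0) *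
        (if (j : ℕ) ≤ (k : ℕ) then h ((k : ℕ) - (j : ℕ)) else 0)
      = ∑ t ∈ Finset.range ((i : ℕ) - (j : ℕ) + 1),
          f ((i : ℕ) - (j : ℕ) - t) * h t := by
  rw [Fin.sum_univ_eq_sum_range
    (fun k => (if k ≤ (i : ℕ) then f ((i : ℕ) - k) else 0) *
      (if (j : ℕ) ≤ k then h (k - (j : ℕ)) else 0)) n]
  have hsub : Finset.Icc (j : ℕ) (i : ℕ) ⊆ Finset.range n := by
    intro k hk
    rw [Finset.mem_Icc] at hk
    exact Finset.mem_range.mpr (lt_of_le_of_lt hk.2 i.isLt)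
  rw [← Finset.sum_subset hsub (by
    intro k _ hk
    rw [Finset.mem_Icc] at hk
    push_neg at hk
    by_cases h2 : (j : ℕ) ≤ k
    · rw [if_neg (show ¬ k ≤ (i : ℕ) by omega), zero_mul]
    · rw [if_neg h2, mul_zero])]
  have : ∀ k ∈ Finset.Icc (j : ℕ) (i : ℕ),
      (if k ≤ (i : ℕ) then f ((i : ℕ) - k) else 0) *
        (if (j : ℕ) ≤ k then h (k - (j : ℕ)) else 0)
        = f ((i : ℕ) - k) * h (k - (j : ℕ)) := by
    intro k hk
    rw [Finset.mem_Icc] at hk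
    rw [if_pos hk.2, if_pos hk.1]
  have hIcc : Finset.Icc (j : ℕ) (i : ℕ) = Finset.Ico (j : ℕ) ((i : ℕ) + 1) := by
    ext k; simp [Finset.mem_Icc, Finset.mem_Ico, Nat.lt_succ_iff]
  rw [Finset.sum_congr rfl this, hIcc, Finset.sum_Ico_eq_sum_range]
  have hrange : (i : ℕ) + 1 - (j : ℕ) = (i : ℕ) - (j : ℕ) + 1 := by omega
  rw [hrange]
  refine Finset.sum_congr rfl ?_
  intro t ht
  rw [Finset.mem_range] at ht
  congr 1
  · congr 1; omega
  · congr 1; omega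

lemma row_sum (n : ℕ) (i : Fin n) (f : ℕ → ℝ) :
    ∑ k : Fin n, (if (k : ℕ) ≤ (i : ℕ) then f ((i : ℕ) - (k : ℕ)) else 0)
      = ∑ t ∈ Finset.range ((i : ℕ) + 1), f t := by
  rw [Fin.sum_univ_eq_sum_range
    (fun k => if k ≤ (i : ℕ) then f ((i : ℕ) - k) else 0) n]
  have hsub : Finset.range ((i : ℕ) + 1) ⊆ Finset.range n :=
    Finset.range_subset_range.mpr i.isLt
  rw [← Finset.sum_subset hsub (by
    intro k _ hk
    rw [Finset.mem_range] at hk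
    exact if_neg (by omega))]
  have h1 : ∀ k ∈ Finset.range ((i : ℕ) + 1),
      (if k ≤ (i : ℕ) then f ((i : ℕ) - k) else 0) = f ((i : ℕ) - k) := by
    intro k hk
    rw [Finset.mem_range] at hk
    exact if_pos (by omega)
  rw [Finset.sum_congr rfl h1, ← Finset.sum_range_reflect]
  refine Finset.sum_congr rfl ?_
  intro t ht
  rw [Finset.mem_range] at ht
  congr 1
  omega

lemma mul_Gmat_eq_one (n b : ℕ) (θ : Fin b → ℝ) (hθ : thetaExt b θ 0 ≠ 0) :
    bandedToeplitz n b θ * Gmat n b θ = 1 := by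
  ext i j
  rw [Matrix.mul_apply, Matrix.one_apply]
  have hentry : ∀ k : Fin n, bandedToeplitz n b θ i k * Gmat n b θ k j
      = (if (k : ℕ) ≤ (i : ℕ) then thetaExt b θ ((i : ℕ) - (k : ℕ)) else 0) *
        (if (j : ℕ) ≤ (k : ℕ) then gSeq b θ ((k : ℕ) - (j : ℕ)) else 0) := by
    intro k; rw [bandedToeplitz_eq]; rfl
  rw [Finset.sum_congr rfl (fun k _ => hentry k)]
  by_cases hj : (j : ℕ) ≤ (i : ℕ)
  · rw [band_sum n i j hj]
    set d := (i : ℕ) - (j : ℕ) with hd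
    have h1 : ∀ t ∈ Finset.range (d + 1),
        thetaExt b θ (d - t) * gSeq b θ t
          = thetaExt b θ (d - t) * gSeq b θ (d - (d - t)) := by
      intro t ht
      rw [Finset.mem_range] at ht
      congr 2
      omega
    rw [Finset.sum_congr rfl h1]
    have hrefl := Finset.sum_range_reflect
      (fun k => thetaExt b θ k * gSeq b θ (d - k)) (d+1)
    simp only [Nat.add_sub_cancel] at hrefl
    rw [hrefl, gSeq_conv b θ hθ d]
    have : d = 0 ↔ i = j := by
      constructor
      · intro h0; exact Fin.ext (by omega)
      · intro h0; rw [h0] at hd; omega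
    by_cases h0 : d = 0
    · rw [if_pos h0, if_pos (this.mp h0)]
    · rw [if_neg h0, if_neg (fun hc => h0 (this.mpr hc))]
  · have hz : ∀ k : Fin n,
        (if (k : ℕ) ≤ (i : ℕ) then thetaExt b θ ((i : ℕ) - (k : ℕ)) else 0) *
          (if (j : ℕ) ≤ (k : ℕ) then gSeq b θ ((k : ℕ) - (j : ℕ)) else 0) = 0 := by
      intro k
      by_cases h1 : (k : ℕ) ≤ (i : ℕ)
      · rw [if_neg (show ¬ (j : ℕ) ≤ (k : ℕ) by omega), mul_zero]
      · rw [if_neg h1, zero_mul]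
    rw [Finset.sum_congr rfl (fun k _ => hz k), Finset.sum_const_zero,
      if_neg (fun hc => hj (by rw [hc]))]

/-- Counting lemma. -/
lemma count_sum (n : ℕ) (f : ℕ → ℝ) :
    ∑ i ∈ Finset.range n, ∑ t ∈ Finset.range (i + 1), f t
      = ∑ t ∈ Finset.range n, ((n - t : ℕ) : ℝ) * f t := by
  induction n with
  | zero => simp
  | succ n ih =>
    have h1 : ∀ t ∈ Finset.range n,
        ((n + 1 - t : ℕ) : ℝ) * f t = ((n - t : ℕ) : ℝ) * f t + f t := by
      intro t ht
      rw [Finset.mem_range] at ht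
      have : (n + 1 - t : ℕ) = (n - t) + 1 := by omega
      rw [this]
      push_cast
      ring
    rw [Finset.sum_range_succ, ih,
      Finset.sum_range_succ (fun t => ((n + 1 - t : ℕ) : ℝ) * f t),
      Finset.sum_congr rfl h1, Finset.sum_add_distrib,
      Finset.sum_range_succ f]
    have hns : n + 1 - n = 1 := by omega
    rw [hns]
    push_cast
    ring

/-- With `w = C(θ)⁻¹ · 𝟙`, the squared Frobenius norm of `A · C(θ)⁻¹` equals
`∑ i (n - i) * w i ^ 2` (0-indexed). -/
theorem frobenius_sq_prefix_mul_banded_toeplitz_inverse (n b : ℕ)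
    (hn : 1 ≤ n) (hb : 1 ≤ b) (hbn : b ≤ n)
    (θ : Fin b → ℝ) (hθ : θ ⟨0, hb⟩ ≠ 0)
    (w : Fin n → ℝ)
    (hw : w = Matrix.mulVec (bandedToeplitz n b θ)⁻¹ (fun _ => 1)) :
    ∑ i : Fin n, ∑ j : Fin n,
        ((prefixMatrix n * (bandedToeplitz n b θ)⁻¹) i j) ^ 2
      = ∑ i : Fin n, ((n - (i : ℕ) : ℕ) : ℝ) * (w i) ^ 2 := by
  have hθ0 : thetaExt b θ 0 ≠ 0 := by
    unfold thetaExt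
    have hb' : 0 < b := hb
    rw [dif_pos hb']
    exact hθ
  have hinv : (bandedToeplitz n b θ)⁻¹ = Gmat n b θ :=
    Matrix.inv_eq_right_inv (mul_Gmat_eq_one n b θ hθ0)
  -- partial sums of gSeq
  set W : ℕ → ℝ := fun m => ∑ t ∈ Finset.range (m + 1), gSeq b θ t with hW
  -- w i = W i
  have hwW : ∀ i : Fin n, w i = W (i : ℕ) := by
    intro i
    rw [hw, hinv, Matrix.mulVec]
    show ∑ k : Fin n, Gmat n b θ i k * 1 = W (i : ℕ)
    have : ∀ k : Fin n, Gmat n b θ i k * 1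
        = (if (k : ℕ) ≤ (i : ℕ) then gSeq b θ ((i : ℕ) - (k : ℕ)) else 0) := by
      intro k; rw [mul_one]; rfl
    rw [Finset.sum_congr rfl (fun k _ => this k), row_sum n i (gSeq b θ)]
  -- entries of the product
  have hprod : ∀ i j : Fin n,
      (prefixMatrix n * (bandedToeplitz n b θ)⁻¹) i j
        = if (j : ℕ) ≤ (i : ℕ) then W ((i : ℕ) - (j : ℕ)) else 0 := by
    intro i j
    rw [hinv, Matrix.mul_apply]
    have hentry : ∀ k : Fin n, prefixMatrix n i k * Gmat n b θ k j
        = (if (k : ℕ) ≤ (i : ℕ) then (1 : ℝ) else 0) *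
          (if (j : ℕ) ≤ (k : ℕ) then gSeq b θ ((k : ℕ) - (j : ℕ)) else 0) := by
      intro k; rfl
    rw [Finset.sum_congr rfl (fun k _ => hentry k)]
    by_cases hj : (j : ℕ) ≤ (i : ℕ)
    · rw [band_sum n i j hj (fun _ => (1 : ℝ)) (gSeq b θ), if_pos hj]
      simp [hW]
    · rw [if_neg hj]
      have hz : ∀ k : Fin n,
          (if (k : ℕ) ≤ (i : ℕ) then (1 : ℝ) else 0) *
            (if (j : ℕ) ≤ (k : ℕ) then gSeq b θ ((k : ℕ) - (j : ℕ)) else 0) = 0 := by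
        intro k
        by_cases h1 : (k : ℕ) ≤ (i : ℕ)
        · rw [if_neg (show ¬ (j : ℕ) ≤ (k : ℕ) by omega), mul_zero]
        · rw [if_neg h1, zero_mul]
      rw [Finset.sum_congr rfl (fun k _ => hz k), Finset.sum_const_zero]
  -- rewrite LHS
  have hLHS : ∑ i : Fin n, ∑ j : Fin n,
      ((prefixMatrix n * (bandedToeplitz n b θ)⁻¹) i j) ^ 2
        = ∑ i : Fin n, ∑ t ∈ Finset.range ((i : ℕ) + 1), (W t) ^ 2 := by
    refine Finset.sum_congr rfl ?_
    intro i _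
    have h1 : ∀ j : Fin n, ((prefixMatrix n * (bandedToeplitz n b θ)⁻¹) i j) ^ 2
        = if (j : ℕ) ≤ (i : ℕ) then (W ((i : ℕ) - (j : ℕ))) ^ 2 else 0 := by
      intro j
      rw [hprod i j]
      by_cases hj : (j : ℕ) ≤ (i : ℕ)
      · rw [if_pos hj, if_pos hj]
      · rw [if_neg hj, if_neg hj]; ring
    rw [Finset.sum_congr rfl (fun j _ => h1 j), row_sum n i (fun t => (W t) ^ 2)]
  rw [hLHS, Fin.sum_univ_eq_sum_range (fun i => ∑ t ∈ Finset.range (i + 1), (W t) ^ 2) n,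
    count_sum n (fun t => (W t) ^ 2)]
  have hR : ∑ i : Fin n, ((n - (i : ℕ) : ℕ) : ℝ) * (w i) ^ 2
      = ∑ i : Fin n, ((n - (i : ℕ) : ℕ) : ℝ) * (W (i : ℕ)) ^ 2 :=
    Finset.sum_congr rfl (fun i _ => by rw [hwW])
  rw [hR, Fin.sum_univ_eq_sum_range (fun i => ((n - i : ℕ) : ℝ) * (W i) ^ 2) n]
end

section
/- Let n ≥ 1, let λ ∈ ℝ^n, and let A(λ) be the lower triangular Toeplitz matrix with coefficient vector λ. Let 1 ≤ b ≤ n and θ ∈ ℝ^b with θ_1 ≠ 0, and set w = C(θ)^{-1}·λ ∈ ℝ^n. Then the squared Frobenius norm of A(λ)·C(θ)^{-1} equals Σ_{i=1}^{n} (n−i+1)·w_i². -/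
/-- The `n × n` lower triangular Toeplitz matrix with coefficient vector `c`
(0-indexed: `M i j = c (i - j)` for `j ≤ i`, and `0` for `j > i`). -/
def ltToeplitz (n : ℕ) (c : Fin n → ℝ) : Matrix (Fin n) (Fin n) ℝ :=
  fun i j =>
    if h : (j : ℕ) ≤ (i : ℕ) then
      c ⟨(i : ℕ) - (j : ℕ), Nat.lt_of_le_of_lt (Nat.sub_le _ _) i.isLt⟩
    else 0

/-! The lower triangular Toeplitz matrices are the polynomials in the nilpotent shift `S`
(`S i j = 1` iff `i = j + 1`). Hence they commute with each other, and, since the first basis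
vector `e₀` is cyclic for `S`, they are determined by their first column. This gives
`C(θ) A(w) = A(C(θ) w) = A(λ)`, so `A(λ) C(θ)⁻¹ = A(w)`, in which `w k` occurs `n - k` times. -/

open Matrix

section lowerShift

variable (R : Type*) [Semiring R]

def lowerShift (n : ℕ) : Matrix (Fin n) (Fin n) R :=
  of fun i j => if (i : ℕ) = j + 1 then 1 else 0

theorem lowerShift_apply (n : ℕ) (i j : Fin n) :
    lowerShift R n i j = if (i : ℕ) = j + 1 then 1 else 0 := rfl

theorem lowerShift_pow_apply (n k : ℕ) (i j : Fin n) :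
    (lowerShift R n ^ k) i j = if (i : ℕ) = j + k then 1 else 0 := by
  induction k generalizing j with
  | zero => simp [one_apply, Fin.ext_iff]
  | succ k ih =>
    rw [pow_succ, mul_apply]
    simp only [ih, lowerShift_apply, ite_mul, one_mul, zero_mul]
    by_cases h : (i : ℕ) = j + (k + 1)
    · rw [if_pos h, Fintype.sum_eq_single ⟨j + 1, by omega⟩ fun l hl => ?_]
      · rw [if_pos (by simp only; omega), if_pos rfl]
      · have : (l : ℕ) ≠ j + 1 := fun h' => hl (Fin.ext h')
        simp [this]
    · rw [if_neg h]
      refine Finset.sum_eq_zero fun l _ => ?_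
      split_ifs <;> first | rfl | omega

theorem lowerShift_pow_mulVec_single_zero (n : ℕ) [NeZero n] (j : Fin n) :
    lowerShift R n ^ (j : ℕ) *ᵥ Pi.single 0 1 = Pi.single j 1 := by
  ext i
  simp [lowerShift_pow_apply, Pi.single_apply, Fin.ext_iff]

theorem sum_lowerShift_pow_apply (n : ℕ) (k : Fin n) :
    ∑ i, ∑ j, (lowerShift R n ^ (k : ℕ)) i j = ((n - k : ℕ) : R) := by
  have row_sum (i : Fin n) : ∑ j, (lowerShift R n ^ (k : ℕ)) i j = if k ≤ i then 1 else 0 := by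
    simp only [lowerShift_pow_apply]
    split_ifs with hki
    · rw [Fintype.sum_eq_single ⟨i - k, by omega⟩ fun j hj => if_neg ?_]
      · exact if_pos (by simp only; omega)
      · exact fun h => hj (Fin.ext (by simp only; omega))
    · exact Finset.sum_eq_zero fun j _ => if_neg (by simp only [Fin.le_def] at hki; omega)
  simp [row_sum, Finset.sum_boole, Finset.filter_le_eq_Ici]

variable {R}

theorem eq_of_commute_lowerShift_of_mulVec_single_zero {n : ℕ} [NeZero n]
    {M N : Matrix (Fin n) (Fin n) R} (hM : Commute M (lowerShift R n))
    (hN : Commute N (lowerShift R n)) (h : M *ᵥ Pi.single 0 1 = N *ᵥ Pi.single 0 1) :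
    M = N := by
  refine ext_of_mulVec_single fun j => ?_
  rw [← lowerShift_pow_mulVec_single_zero R, mulVec_mulVec, mulVec_mulVec, (hM.pow_right _).eq,
    (hN.pow_right _).eq, ← mulVec_mulVec, ← mulVec_mulVec, h]

end lowerShift

theorem ltToeplitz_eq_sum_smul_lowerShift_pow (n : ℕ) (c : Fin n → ℝ) :
    ltToeplitz n c = ∑ k, c k • lowerShift ℝ n ^ (k : ℕ) := by
  ext i j
  simp only [Matrix.sum_apply, Matrix.smul_apply, lowerShift_pow_apply, smul_eq_mul, mul_ite,
    mul_one, mul_zero, ltToeplitz]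
  split_ifs with hji
  · rw [Fintype.sum_eq_single ⟨i - j, by omega⟩ fun k hk => if_neg ?_]
    · exact (if_pos (by simp only; omega)).symm
    · exact fun h => hk (Fin.ext (by simp only; omega))
  · exact (Finset.sum_eq_zero fun k _ => if_neg (by omega)).symm

theorem ltToeplitz_commute_lowerShift (n : ℕ) (c : Fin n → ℝ) :
    Commute (ltToeplitz n c) (lowerShift ℝ n) := by
  rw [ltToeplitz_eq_sum_smul_lowerShift_pow]
  exact Commute.sum_left _ _ _ fun k _ => ((Commute.refl _).pow_left _).smul_left _

theorem ltToeplitz_commute (n : ℕ) (a c : Fin n → ℝ) :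
    Commute (ltToeplitz n a) (ltToeplitz n c) := by
  rw [ltToeplitz_eq_sum_smul_lowerShift_pow n c]
  exact Commute.sum_right _ _ _ fun k _ =>
    ((ltToeplitz_commute_lowerShift n a).pow_right _).smul_right _

theorem ltToeplitz_mulVec_single_zero (n : ℕ) [NeZero n] (c : Fin n → ℝ) :
    ltToeplitz n c *ᵥ Pi.single 0 1 = c := by
  ext i
  simp [ltToeplitz]

theorem ltToeplitz_mul (n : ℕ) (a c : Fin n → ℝ) :
    ltToeplitz n a * ltToeplitz n c = ltToeplitz n (ltToeplitz n a *ᵥ c) := by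
  rcases n.eq_zero_or_pos with rfl | hn
  · exact Subsingleton.elim _ _
  · have : NeZero n := ⟨hn.ne'⟩
    refine eq_of_commute_lowerShift_of_mulVec_single_zero ?_ (ltToeplitz_commute_lowerShift _ _) ?_
    · exact (ltToeplitz_commute_lowerShift n a).mul_left (ltToeplitz_commute_lowerShift n c)
    · rw [← mulVec_mulVec, ltToeplitz_mulVec_single_zero, ltToeplitz_mulVec_single_zero]

theorem det_ltToeplitz (n : ℕ) [NeZero n] (c : Fin n → ℝ) :
    (ltToeplitz n c).det = c 0 ^ n := by
  rw [det_of_isLowerTriangular _ fun i j hij => dif_neg (not_le.mpr hij)]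
  simp [ltToeplitz]

theorem bandedToeplitz_eq_ltToeplitz (n b : ℕ) (θ : Fin b → ℝ) :
    bandedToeplitz n b θ = ltToeplitz n fun k => if h : (k : ℕ) < b then θ ⟨k, h⟩ else 0 := by
  ext i j
  unfold bandedToeplitz ltToeplitz
  by_cases hji : (j : ℕ) ≤ i <;> simp [hji]

theorem ltToeplitz_apply_sq (n : ℕ) (c : Fin n → ℝ) (i j : Fin n) :
    ltToeplitz n c i j ^ 2 = ltToeplitz n (c ^ 2) i j := by
  unfold ltToeplitz
  split_ifs <;> simp

theorem sum_ltToeplitz_apply (n : ℕ) (c : Fin n → ℝ) :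
    ∑ i, ∑ j, ltToeplitz n c i j = ∑ k : Fin n, ((n - k : ℕ) : ℝ) * c k := by
  calc ∑ i, ∑ j, ltToeplitz n c i j
      = ∑ k, c k * ∑ i, ∑ j, (lowerShift ℝ n ^ (k : ℕ)) i j := by
        simp only [ltToeplitz_eq_sum_smul_lowerShift_pow, Matrix.sum_apply, Matrix.smul_apply,
          smul_eq_mul, Finset.mul_sum]
        exact (Finset.sum_congr rfl fun i _ => Finset.sum_comm).trans Finset.sum_comm
    _ = ∑ k : Fin n, ((n - k : ℕ) : ℝ) * c k := by
        simp only [sum_lowerShift_pow_apply, mul_comm]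

theorem frobenius_sq_toeplitz_workload_mul_banded_toeplitz_inverse_general (n b : ℕ)
    (hn : 1 ≤ n) (hb : 1 ≤ b)
    (lam : Fin n → ℝ) (θ : Fin b → ℝ) (hθ : θ ⟨0, hb⟩ ≠ 0)
    (w : Fin n → ℝ)
    (hw : w = Matrix.mulVec (bandedToeplitz n b θ)⁻¹ lam) :
    ∑ i : Fin n, ∑ j : Fin n,
        ((ltToeplitz n lam * (bandedToeplitz n b θ)⁻¹) i j) ^ 2
      = ∑ i : Fin n, ((n - (i : ℕ) : ℕ) : ℝ) * (w i) ^ 2 := by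
  have : NeZero n := ⟨by omega⟩
  rw [bandedToeplitz_eq_ltToeplitz] at hw ⊢
  set C := ltToeplitz n fun k => if h : (k : ℕ) < b then θ ⟨k, h⟩ else 0 with hC
  have hdet : IsUnit C.det := by
    rw [hC, det_ltToeplitz]
    exact (pow_ne_zero _ ((dif_pos hb).trans_ne hθ)).isUnit
  have hlam : C * ltToeplitz n w = ltToeplitz n lam := by
    rw [hC, ltToeplitz_mul, ← hC, hw, mulVec_mulVec, mul_nonsing_inv _ hdet, one_mulVec]
  rw [← hlam, hC, (ltToeplitz_commute _ _ _).eq, ← hC, mul_assoc, mul_nonsing_inv _ hdet,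
    mul_one]
  simp only [ltToeplitz_apply_sq, sum_ltToeplitz_apply, Pi.pow_apply]

/-- With `w = C(θ)⁻¹ · λ`, the squared Frobenius norm of `A(λ) · C(θ)⁻¹`
equals `∑ i (n - i) * w i ^ 2` (0-indexed). -/
theorem frobenius_sq_toeplitz_workload_mul_banded_toeplitz_inverse (n b : ℕ)
    (hn : 1 ≤ n) (hb : 1 ≤ b) (hbn : b ≤ n)
    (lam : Fin n → ℝ) (θ : Fin b → ℝ) (hθ : θ ⟨0, hb⟩ ≠ 0)
    (w : Fin n → ℝ)
    (hw : w = Matrix.mulVec (bandedToeplitz n b θ)⁻¹ lam) :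
    ∑ i : Fin n, ∑ j : Fin n,
        ((ltToeplitz n lam * (bandedToeplitz n b θ)⁻¹) i j) ^ 2
      = ∑ i : Fin n, ((n - (i : ℕ) : ℕ) : ℝ) * (w i) ^ 2 :=
  frobenius_sq_toeplitz_workload_mul_banded_toeplitz_inverse_general n b hn hb lam θ hθ w hw
end
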